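/- Let f be an unbounded modulus function and suppose there exists ξ > 0 such that g_f(k) := limsup_{n → ∞} f(n)/f(2^k n) > ξ for every k ∈ ℕ. Then there exists a set A ⊆ ℕ whose natural density is zero but for which limsup_{n → ∞} f(α_A(n))/f(n) ≥ ξ; in particular A belongs to the statistical ideal 𝔍_s but not to the f-ideal 𝔍_f, so 𝔍_s ≠ 𝔍_f. -/

import Mathlib

open Filter Set Topology

/-- `f : ℝ → ℝ` (viewed on `ℝ⁺`) is an unbounded modulus function. -/
def IsModulus (f : ℝ → ℝ) : Prop :=
  (∀ x : ℝ, 0 ≤ x → 0 ≤ f x) ∧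
  (∀ x : ℝ, 0 ≤ x → (f x = 0 ↔ x = 0)) ∧
  (∀ x y : ℝ, 0 ≤ x → 0 ≤ y → f (x + y) ≤ f x + f y) ∧
  (∀ x y : ℝ, 0 ≤ x → x ≤ y → f x ≤ f y) ∧
  ContinuousWithinAt f (Set.Ici 0) 0 ∧
  Tendsto (fun n : ℕ => f n) atTop atTop

/-- `α_A(n) = |A ∩ [1,n]|`. -/
noncomputable def alphaCount (A : Set ℕ) (n : ℕ) : ℕ := (A ∩ Set.Icc 1 n).ncard

/-- The statistical ideal: sets of natural density zero. -/
def statIdeal : Set (Set ℕ) :=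
  {A | Tendsto (fun n : ℕ => (alphaCount A n : ℝ) / n) atTop (nhds 0)}

/-- The `f`-ideal: sets of `f`-density zero. -/
def fIdeal (f : ℝ → ℝ) : Set (Set ℕ) :=
  {A | Tendsto (fun n : ℕ => f (alphaCount A n) / f n) atTop (nhds 0)}

/-- `g_f(k) = limsup_n f(n)/f(2^k n)`. -/
noncomputable def gmod (f : ℝ → ℝ) (k : ℕ) : ℝ :=
  Filter.limsup (fun n : ℕ => f n / f (2 ^ k * n)) atTop

/-- `h_f(t) = limsup_n f(n)/f(t n)` for real `t`. -/
noncomputable def hmod (f : ℝ → ℝ) (t : ℝ) : ℝ :=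
  Filter.limsup (fun n : ℕ => f n / f (t * n)) atTop

/-!
Choose `s_k → ∞` so fast that `2^k s_k < s_{k+1}` and `f(s_k)/f(2^k s_k) > ξ`, and let `A` be
the union of the blocks `(2^k s_k - s_k, 2^k s_k]`. At `n = 2^k s_k` the whole `k`-th block has
been counted, so `α_A(n) ≥ s_k` and `f(α_A(n))/f(n) > ξ`. On the other hand, below the start of
block `k + 1` the set `A` has at most `2 s_k` elements, all past the start of block `k`, which
lies beyond `2^(k-1) s_k`; hence `α_A(n)/n ≤ 4/2^k` there and `A` has density zero.
-/

lemma IsModulus.nonneg {f : ℝ → ℝ} (hf : IsModulus f) {x : ℝ} (hx : 0 ≤ x) : 0 ≤ f x :=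
  hf.1 x hx

lemma IsModulus.mono {f : ℝ → ℝ} (hf : IsModulus f) {x y : ℝ} (hx : 0 ≤ x) (hxy : x ≤ y) :
    f x ≤ f y :=
  hf.2.2.2.1 x y hx hxy

lemma alphaCount_le_self (A : Set ℕ) (n : ℕ) : alphaCount A n ≤ n :=
  (Set.ncard_le_ncard inter_subset_right (finite_Icc 1 n)).trans_eq (by simp)

lemma exists_seq_forall_and_lt {P : ℕ → ℕ → Prop} (h : ∀ k, ∃ᶠ n in atTop, P k n)
    (b : ℕ → ℕ → ℕ) : ∃ s : ℕ → ℕ, (∀ k, P k (s k)) ∧ ∀ k, b k (s k) < s (k + 1) := by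
  choose g hg_lt hg using fun k N => frequently_atTop'.1 (h k) N
  refine ⟨fun k => Nat.rec (g 0 0) (fun k sk => g (k + 1) (b k sk)) k, fun k => ?_,
    fun k => hg_lt _ _⟩
  cases k <;> exact hg _ _

def blockSet (s : ℕ → ℕ) : Set ℕ := ⋃ k, Ioc (2 ^ k * s k - s k) (2 ^ k * s k)

section blockSet

variable {s : ℕ → ℕ}

lemma blockEnd_lt_blockStart_succ (hs : ∀ k, 2 ^ k * s k < s (k + 1)) (k : ℕ) :
    2 ^ k * s k < 2 ^ (k + 1) * s (k + 1) - s (k + 1) := by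
  have := hs k
  have : 2 * s (k + 1) ≤ 2 ^ (k + 1) * s (k + 1) :=
    Nat.mul_le_mul_right _ (Nat.le_self_pow k.succ_ne_zero 2)
  omega

lemma strictMono_blockStart (hs : ∀ k, 2 ^ k * s k < s (k + 1)) :
    StrictMono fun k => 2 ^ k * s k - s k :=
  strictMono_nat_of_lt_succ fun k => (Nat.sub_le _ _).trans_lt (blockEnd_lt_blockStart_succ hs k)

lemma blockEnd_lt_of_lt (hs : ∀ k, 2 ^ k * s k < s (k + 1)) {j k : ℕ} (hjk : j < k) :
    2 ^ j * s j < s k := by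
  obtain ⟨k, rfl⟩ := Nat.exists_eq_add_of_lt hjk
  have hmono : Monotone fun k => 2 ^ k * s k := monotone_nat_of_le_succ fun k =>
    (hs k).le.trans (Nat.le_mul_of_pos_left _ (Nat.two_pow_pos _))
  exact (hmono (j.le_add_right k)).trans_lt (hs _)

lemma blockSet_inter_Icc_subset (hs : ∀ k, 2 ^ k * s k < s (k + 1)) {k n : ℕ}
    (hn : n ≤ 2 ^ (k + 1) * s (k + 1) - s (k + 1)) :
    blockSet s ∩ Icc 1 n ⊆ Icc 1 (s k) ∪ Ioc (2 ^ k * s k - s k) (2 ^ k * s k) := by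
  rintro x ⟨hx, hx1, hxn⟩
  obtain ⟨j, hxj⟩ := mem_iUnion.1 hx
  rcases lt_trichotomy j k with hjk | rfl | hkj
  · exact Or.inl ⟨hx1, hxj.2.trans (blockEnd_lt_of_lt hs hjk).le⟩
  · exact Or.inr hxj
  · have := (strictMono_blockStart hs).monotone (show k + 1 ≤ j from hkj)
    have := hxj.1
    omega

lemma alphaCount_blockSet_le (hs : ∀ k, 2 ^ k * s k < s (k + 1)) {k n : ℕ}
    (hn : n ≤ 2 ^ (k + 1) * s (k + 1) - s (k + 1)) : alphaCount (blockSet s) n ≤ 2 * s k := by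
  calc alphaCount (blockSet s) n
      ≤ (Icc 1 (s k) ∪ Ioc (2 ^ k * s k - s k) (2 ^ k * s k)).ncard :=
        Set.ncard_le_ncard (blockSet_inter_Icc_subset hs hn)
          ((finite_Icc _ _).union (finite_Ioc _ _))
    _ ≤ (Icc 1 (s k)).ncard + (Ioc (2 ^ k * s k - s k) (2 ^ k * s k)).ncard :=
        Set.ncard_union_le _ _
    _ ≤ 2 * s k := by simp only [Set.ncard_Icc_nat, Set.ncard_Ioc_nat]; omega

lemma le_alphaCount_blockSet (k : ℕ) : s k ≤ alphaCount (blockSet s) (2 ^ k * s k) := by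
  have hsub : Ioc (2 ^ k * s k - s k) (2 ^ k * s k) ⊆ blockSet s ∩ Icc 1 (2 ^ k * s k) :=
    fun x hx => ⟨mem_iUnion.2 ⟨k, hx⟩, by have := hx.1; omega, hx.2⟩
  have hle : s k ≤ 2 ^ k * s k := Nat.le_mul_of_pos_left _ (Nat.two_pow_pos k)
  calc s k = (Ioc (2 ^ k * s k - s k) (2 ^ k * s k)).ncard := by rw [Set.ncard_Ioc_nat]; omega
    _ ≤ alphaCount (blockSet s) (2 ^ k * s k) :=
      Set.ncard_le_ncard hsub ((finite_Icc _ _).inter_of_right _)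

lemma two_pow_mul_alphaCount_blockSet_le (hs : ∀ k, 2 ^ k * s k < s (k + 1)) {k n : ℕ}
    (hk : k ≠ 0) (hn₁ : 2 ^ k * s k - s k < n) (hn₂ : n ≤ 2 ^ (k + 1) * s (k + 1) - s (k + 1)) :
    2 ^ k * alphaCount (blockSet s) n ≤ 4 * n := by
  have hα := Nat.mul_le_mul_left (2 ^ k) (alphaCount_blockSet_le hs hn₂)
  have : 2 * s k ≤ 2 ^ k * s k := Nat.mul_le_mul_right _ (Nat.le_self_pow hk 2)
  have : 2 ^ k * (2 * s k) = 2 * (2 ^ k * s k) := by ring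
  omega

lemma alphaCount_blockSet_div_le (hs : ∀ k, 2 ^ k * s k < s (k + 1)) {k n : ℕ} (hk : k ≠ 0)
    (hn : 2 ^ k * s k - s k < n) : (alphaCount (blockSet s) n : ℝ) / n ≤ 4 / 2 ^ k := by
  have ha : StrictMono fun j => 2 ^ (k + j) * s (k + j) - s (k + j) :=
    (strictMono_blockStart hs).comp (strictMono_id.const_add k)
  obtain ⟨j, hj₁, hj₂⟩ := ha.exists_between_of_tendsto_atTop ha.tendsto_atTop hn
  have hbound := two_pow_mul_alphaCount_blockSet_le hs (by omega) hj₁ hj₂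
  have hn₀ : (0 : ℝ) < n := by exact_mod_cast hn.trans_le' (Nat.zero_le _)
  calc (alphaCount (blockSet s) n : ℝ) / n ≤ 4 / 2 ^ (k + j) := by
        rw [div_le_div_iff₀ hn₀ (by positivity)]
        exact_mod_cast (mul_comm _ _).trans_le hbound
    _ ≤ 4 / 2 ^ k := by gcongr <;> norm_num

lemma tendsto_alphaCount_blockSet_div (hs : ∀ k, 2 ^ k * s k < s (k + 1)) :
    Tendsto (fun n : ℕ => (alphaCount (blockSet s) n : ℝ) / n) atTop (𝓝 0) := by
  refine tendsto_order.2 ⟨fun a ha => Eventually.of_forall fun n => ha.trans_le (by positivity),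
    fun ε hε => ?_⟩
  obtain ⟨k, hk⟩ := exists_pow_lt_of_lt_one (div_pos hε four_pos) (by norm_num : (1 / 2 : ℝ) < 1)
  filter_upwards [eventually_gt_atTop (2 ^ (k + 1) * s (k + 1) - s (k + 1))] with n hn
  calc (alphaCount (blockSet s) n : ℝ) / n ≤ 4 / 2 ^ (k + 1) :=
        alphaCount_blockSet_div_le hs k.succ_ne_zero hn
    _ ≤ 4 * (1 / 2) ^ k := by rw [one_div_pow, ← div_eq_mul_one_div]; gcongr <;> norm_num
    _ < ε := by linarith [(lt_div_iff₀ four_pos).1 hk]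

end blockSet

lemma IsModulus.frequently_lt_div_of_lt_gmod {f : ℝ → ℝ} (hf : IsModulus f) {ξ : ℝ} {k : ℕ}
    (h : ξ < gmod f k) : ∃ᶠ n : ℕ in atTop, ξ < f n / f (2 ^ k * n) :=
  frequently_lt_of_lt_limsup
    (isBoundedUnder_of_eventually_ge (a := 0) (Eventually.of_forall fun n =>
      div_nonneg (hf.nonneg n.cast_nonneg) (hf.nonneg (by positivity)))).isCoboundedUnder_le h

lemma IsModulus.isBoundedUnder_alphaCount_div {f : ℝ → ℝ} (hf : IsModulus f) (A : Set ℕ) :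
    IsBoundedUnder (· ≤ ·) atTop fun n : ℕ => f (alphaCount A n) / f n :=
  isBoundedUnder_of_eventually_le (a := 1) <| Eventually.of_forall fun n =>
    div_le_one_of_le₀ (hf.mono (Nat.cast_nonneg _) (Nat.cast_le.2 (alphaCount_le_self A n)))
      (hf.nonneg n.cast_nonneg)

lemma IsModulus.le_limsup_blockSet {f : ℝ → ℝ} (hf : IsModulus f) {s : ℕ → ℕ}
    (hs : ∀ k, 2 ^ k * s k < s (k + 1)) {ξ : ℝ}
    (hξ : ∀ k, 1 ≤ k → ξ < f (s k) / f (2 ^ k * s k)) :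
    ξ ≤ limsup (fun n : ℕ => f (alphaCount (blockSet s) n) / f n) atTop := by
  refine le_limsup_of_frequently_le ?_ (hf.isBoundedUnder_alphaCount_div _)
  have hend : Tendsto (fun k => 2 ^ (k + 1) * s (k + 1)) atTop atTop :=
    (strictMono_nat_of_lt_succ fun k => (hs (k + 1)).trans_le
      (Nat.le_mul_of_pos_left _ (Nat.two_pow_pos _))).tendsto_atTop
  refine hend.frequently (Frequently.of_forall fun k => ?_)
  calc ξ ≤ f (s (k + 1)) / f (2 ^ (k + 1) * s (k + 1)) := (hξ (k + 1) k.succ_pos).le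
    _ ≤ f (alphaCount (blockSet s) (2 ^ (k + 1) * s (k + 1))) / f (2 ^ (k + 1) * s (k + 1)) := by
      gcongr
      · exact hf.nonneg (by positivity)
      · exact hf.mono (Nat.cast_nonneg _) (Nat.cast_le.2 (le_alphaCount_blockSet _))
    _ = _ := by push_cast; rfl

theorem exists_statIdeal_not_fIdeal (f : ℝ → ℝ) (hf : IsModulus f) (ξ : ℝ) (hξ : 0 < ξ)
    (h : ∀ k : ℕ, 1 ≤ k → ξ < gmod f k) :
    ∃ A : Set ℕ,
      Tendsto (fun n : ℕ => (alphaCount A n : ℝ) / n) atTop (nhds 0) ∧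
      ξ ≤ Filter.limsup (fun n : ℕ => f (alphaCount A n) / f n) atTop ∧
      A ∈ statIdeal ∧ A ∉ fIdeal f ∧ statIdeal ≠ fIdeal f := by
  have hfreq : ∀ k, ∃ᶠ n : ℕ in atTop, 1 ≤ k → ξ < f n / f (2 ^ k * n) := fun k => by
    rcases Nat.eq_zero_or_pos k with rfl | hk
    · exact Frequently.of_forall fun _ h0 => absurd h0 (by norm_num)
    · exact (hf.frequently_lt_div_of_lt_gmod (h k hk)).mono fun _ hn _ => hn
  obtain ⟨s, hξs, hs⟩ := exists_seq_forall_and_lt hfreq fun k n => 2 ^ k * n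
  have hdens := tendsto_alphaCount_blockSet_div hs
  have hlimsup := hf.le_limsup_blockSet hs fun k hk => by exact_mod_cast hξs k hk
  have hnot : blockSet s ∉ fIdeal f := fun hA =>
    (hξ.trans_le (hlimsup.trans_eq (Tendsto.limsup_eq hA))).false
  exact ⟨blockSet s, hdens, hlimsup, hdens, hnot, fun he => hnot (he ▸ hdens)⟩
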